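/- Let N_P and R_P(t), t ≥ 1, be real constants with R_P(1) ≠ N_P, and let f : ℕ → ℝ be a sequence such that Q_P(T) = N_P + Σ_{t=0}^{T−1} f(t)·(R_P(T−t) − N_P) for every T ≥ 1. For each T ≥ 1 let Q̂_P(T) be an integrable real-valued random variable with E[Q̂_P(T)] = Q_P(T). Define estimators recursively by f̂(T−1) = (Q̂_P(T) − N_P)/(R_P(1) − N_P) − Σ_{t=0}^{T−2} f̂(t)·(R_P(T−t) − N_P)/(R_P(1) − N_P). Then for every t ≥ 0, E[f̂(t)] = f(t), i.e., each f̂(t) is an unbiased estimator of f(t). -/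

import Mathlib

/-!
By linearity of expectation, the numbers `E[f̂(t)]` satisfy the defining recursion with `Q̂_P`
replaced by `Q_P`. That recursion is forward substitution for the lower-triangular Toeplitz
system `Q_P(k+1) − N_P = ∑_{t ≤ k} f(t)·(R_P(k+1−t) − N_P)`, whose diagonal `R_P(1) − N_P` is
nonzero; the model says `f` solves this system, and its solution is unique.
-/

open MeasureTheory ProbabilityTheory Finset

theorem eq_of_forward_substitution {K : Type*} [Field K] {r f g y : ℕ → K} (hr : r 1 ≠ 0)
    (hy : ∀ k, y k = ∑ t ∈ range (k + 1), f t * r (k + 1 - t))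
    (hg : ∀ k, g k = y k / r 1 - ∑ t ∈ range k, g t * (r (k + 1 - t) / r 1)) :
    g = f := by
  funext k
  induction k using Nat.strong_induction_on with
  | _ k ih =>
    have hprev : ∑ t ∈ range k, g t * (r (k + 1 - t) / r 1)
        = (∑ t ∈ range k, f t * r (k + 1 - t)) / r 1 := by
      rw [sum_div]
      exact sum_congr rfl fun t ht => by rw [ih t (mem_range.mp ht), mul_div_assoc]
    rw [hg k, hprev, hy k, sum_range_succ, Nat.add_sub_cancel_left]
    field_simp
    ring

/-- Under the model `Q_P(T) = N_P + Σ_{t=0}^{T−1} f(t)·(R_P(T−t) − N_P)` for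
`T ≥ 1`, with `E[Q̂_P(T)] = Q_P(T)`, the estimators defined recursively by
`f̂(T−1) = (Q̂_P(T) − N_P)/(R_P(1) − N_P) − Σ_{t=0}^{T−2} f̂(t)·(R_P(T−t) − N_P)/(R_P(1) − N_P)`
are unbiased: `E[f̂(t)] = f(t)` for every `t ≥ 0`. -/
theorem fhat_unbiased
    {Ω : Type*} [MeasureSpace Ω] [IsProbabilityMeasure (ℙ : Measure Ω)]
    (NP : ℝ) (RP : ℕ → ℝ) (hne : RP 1 ≠ NP)
    (f QP : ℕ → ℝ)
    (hmodel : ∀ T : ℕ, 1 ≤ T →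
      QP T = NP + ∑ t ∈ Finset.range T, f t * (RP (T - t) - NP))
    (Qhat : ℕ → Ω → ℝ)
    (hQint : ∀ T : ℕ, 1 ≤ T → Integrable (Qhat T))
    (hQexp : ∀ T : ℕ, 1 ≤ T → ∫ ω, Qhat T ω = QP T)
    (fhat : ℕ → Ω → ℝ)
    (hfint : ∀ t, Integrable (fhat t))
    (hrec : ∀ (k : ℕ) (ω : Ω), fhat k ω =
      (Qhat (k + 1) ω - NP) / (RP 1 - NP)
        - ∑ t ∈ Finset.range k, fhat t ω * ((RP (k + 1 - t) - NP) / (RP 1 - NP))) :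
    ∀ t : ℕ, ∫ ω, fhat t ω = f t := by
  have hmean : ∀ k, ∫ ω, fhat k ω = (QP (k + 1) - NP) / (RP 1 - NP)
      - ∑ t ∈ range k, (∫ ω, fhat t ω) * ((RP (k + 1 - t) - NP) / (RP 1 - NP)) := by
    intro k
    have hQ := hQint (k + 1) k.succ_pos
    have hQc : Integrable (fun ω => Qhat (k + 1) ω - NP) := hQ.sub (integrable_const NP)
    simp_rw [hrec k]
    rw [integral_sub (hQc.div_const _)
        (integrable_finsetSum _ fun t _ => (hfint t).mul_const _),
      integral_finsetSum _ fun t _ => (hfint t).mul_const _, integral_div,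
      integral_sub hQ (integrable_const NP), integral_const, hQexp (k + 1) k.succ_pos]
    simp only [probReal_univ, one_smul, integral_mul_const]
  intro t
  refine congrFun (eq_of_forward_substitution (r := fun s => RP s - NP)
    (y := fun k => QP (k + 1) - NP) (sub_ne_zero.mpr hne) (fun k => ?_) hmean) t
  rw [hmodel (k + 1) k.succ_pos, add_sub_cancel_left]
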